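/- arXiv:2604.11363 — 2 statements merged into one kernel-verified Lean document; each statement's English description precedes it below -/
import Mathlib

section
/- Let K ≥ 2, θ ∈ (0,∞)^K, and let ℒ be the Wright–Fisher generator ℒf(x) = (1/2) Σ_{i=1}^K (θ_i − |θ| x_i) ∂f/∂x_i + (1/2) Σ_{i,j=1}^K x_i (δ_{ij} − x_j) ∂²f/∂x_i∂x_j. Then for every m ∈ ℤ_+^K with |m| ≥ 1 and every x ∈ Δ_K, ℒ applied to the function x ↦ g(x, m) satisfies ℒ g(·,m)(x) = λ_{|m|} Σ_{i=1}^K (m_i/|m|) [ g(x, m − e_i) − g(x, m) ], where e_i is the i-th standard basis vector of ℤ^K (terms with m_i = 0 vanish). -/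
/-!
Since `dualityG θ m` is a constant multiple `C(m) x^m` of a monomial, everything reduces to
computing the generator on `x^m`. Euler's identity `∑ i, x_i ∂_i x^m = |m| x^m`, applied once to
the drift and twice to the diffusion part, turns every term with an `x`-dependent coefficient into
a multiple of `x^m`, leaving the polynomial identity (valid on all of `ℝ^K`)
`ℒ x^m = ½ ∑ i, m_i (θ_i + m_i - 1) x^(m - e_i) - λ_|m| x^m`.
The Pochhammer normalisation is exactly what makes `C(m) (θ_i + m_i - 1) = C(m - e_i) (|θ| + |m| - 1)`
(from `Γ(s + 1) = s Γ(s)`), which turns the first sum into `λ_|m| ∑ i, (m_i / |m|) g(x, m - e_i)`.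
-/

open scoped BigOperators

/-- Pochhammer (rising factorial) symbol `(a)_r = Γ(a+r)/Γ(a)`. -/
noncomputable def poch (a r : ℝ) : ℝ := Real.Gamma (a + r) / Real.Gamma a

/-- The duality function
`g(x, m) = ((|θ|)_{|m|} / ∏_i (θ_i)_{m_i}) ∏_i x_i^{m_i}`. -/
noncomputable def dualityG {K : ℕ} (θ : Fin K → ℝ) (m : Fin K → ℕ)
    (x : Fin K → ℝ) : ℝ :=
  (poch (∑ i, θ i) (∑ i, (m i : ℝ)) / ∏ i, poch (θ i) (m i)) * ∏ i, x i ^ (m i)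

/-- `λ_n = n (n + θ − 1)/2`. -/
noncomputable def lamWF (θ : ℝ) (n : ℕ) : ℝ := n * (n + θ - 1) / 2

open Finset

lemma poch_add_one {a r : ℝ} (h : a + r ≠ 0) : poch a (r + 1) = poch a r * (a + r) := by
  rw [poch, poch, ← add_assoc, Real.Gamma_add_one h]
  ring

lemma poch_pos {a r : ℝ} (ha : 0 < a) (hr : 0 ≤ r) : 0 < poch a r :=
  div_pos (Real.Gamma_pos_of_pos (by linarith)) (Real.Gamma_pos_of_pos ha)

-- `hk` forces `k = 0` when `n = 0`, where Lean's `k / n` is `0`.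
lemma lamWF_mul_div {s : ℝ} {k n : ℕ} (hk : k ≤ n) :
    lamWF s n * ((k : ℝ) / n) = k * (s + n - 1) / 2 := by
  rcases eq_or_ne n 0 with rfl | hn
  · simp [Nat.le_zero.mp hk, lamWF]
  · rw [lamWF]
    field_simp
    ring

namespace WrightFisher

variable {ι : Type*}

lemma single_one_le [DecidableEq ι] {m : ι → ℕ} {i : ι} (h : m i ≠ 0) : Pi.single i 1 ≤ m := by
  intro k
  by_cases hk : k = i
  · subst hk; simp; omega
  · simp [Pi.single_eq_of_ne hk]

lemma update_tsub_one_eq_sub_single [DecidableEq ι] (m : ι → ℕ) (i : ι) :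
    Function.update m i (m i - 1) = m - Pi.single i 1 := by
  funext k
  by_cases hk : k = i
  · subst hk; simp
  · simp [Function.update_of_ne hk, Pi.single_eq_of_ne hk]

variable [Fintype ι]

lemma lamWF_mul_sum_div_mul (s : ℝ) (m : ι → ℕ) (a : ι → ℝ) :
    lamWF s (∑ k, m k) * ∑ i, ((m i : ℝ) / (∑ k, m k : ℕ)) * a i
      = ∑ i, m i * (s + (∑ k, m k : ℕ) - 1) / 2 * a i := by
  rw [mul_sum]
  refine sum_congr rfl fun i _ => ?_
  rw [← mul_assoc, lamWF_mul_div (single_le_sum (fun _ _ => Nat.zero_le _) (mem_univ i))]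

noncomputable def monomial (m : ι → ℕ) (x : ι → ℝ) : ℝ := ∏ k, x k ^ m k

lemma monomial_add (m n : ι → ℕ) (x : ι → ℝ) :
    monomial (m + n) x = monomial m x * monomial n x := by
  simp only [monomial, Pi.add_apply, pow_add, prod_mul_distrib]

lemma differentiable_monomial (m : ι → ℕ) : Differentiable ℝ (monomial m) := by
  unfold monomial; fun_prop

noncomputable def dualityCoeff (θ : ι → ℝ) (m : ι → ℕ) : ℝ :=
  poch (∑ i, θ i) (∑ i, (m i : ℝ)) / ∏ i, poch (θ i) (m i)

lemma dualityG_eq_mul_monomial {K : ℕ} (θ : Fin K → ℝ) (m : Fin K → ℕ) :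
    dualityG θ m = fun x => dualityCoeff θ m * monomial m x := rfl

variable [DecidableEq ι]

lemma monomial_single_one (i : ι) (x : ι → ℝ) : monomial (Pi.single i 1) x = x i := by
  simp [monomial, Pi.single_apply, pow_ite]

lemma monomial_sub_single_one (m : ι → ℕ) (i : ι) (x : ι → ℝ) :
    monomial (m - Pi.single i 1) x = x i ^ (m i - 1) * ∏ k ∈ univ.erase i, x k ^ m k := by
  rw [monomial, ← mul_prod_erase univ _ (mem_univ i)]
  congr 1
  · simp
  · exact prod_congr rfl fun k hk => by simp [Pi.single_eq_of_ne (ne_of_mem_erase hk)]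

lemma monomial_eq_coord_mul_monomial_sub_single {m : ι → ℕ} {i : ι} (h : m i ≠ 0)
    (x : ι → ℝ) : monomial m x = x i * monomial (m - Pi.single i 1) x := by
  conv_lhs => rw [← tsub_add_cancel_of_le (single_one_le h)]
  rw [monomial_add, monomial_single_one, mul_comm]

-- When `m i = 0` the truncated `m - Pi.single i 1` is `m` itself and both sides vanish.
lemma coord_mul_monomial_sub_single (m : ι → ℕ) (i : ι) (x : ι → ℝ) :
    x i * ((m i : ℝ) * monomial (m - Pi.single i 1) x) = m i * monomial m x := by
  rcases eq_or_ne (m i) 0 with h | h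
  · simp [h]
  · rw [monomial_eq_coord_mul_monomial_sub_single h]
    ring

lemma sum_coord_mul_monomial_sub_single (m : ι → ℕ) (x : ι → ℝ) :
    ∑ i, x i * ((m i : ℝ) * monomial (m - Pi.single i 1) x)
      = (∑ i, m i : ℕ) * monomial m x := by
  simp only [coord_mul_monomial_sub_single, ← sum_mul, Nat.cast_sum]

lemma sum_add_single_one (m : ι → ℕ) (i : ι) :
    ∑ k, (m + Pi.single i 1 : ι → ℕ) k = ∑ k, m k + 1 := by
  simp [sum_add_distrib]

lemma natCast_mul_sum_sub_single (m : ι → ℕ) (i : ι) :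
    (m i : ℝ) * (∑ k, (m - Pi.single i 1 : ι → ℕ) k : ℕ) = m i * ((∑ k, m k : ℕ) - 1) := by
  rcases eq_or_ne (m i) 0 with h | h
  · simp [h]
  · have hsum : ∑ k, m k = ∑ k, (m - Pi.single i 1 : ι → ℕ) k + 1 := by
      conv_lhs => rw [← tsub_add_cancel_of_le (single_one_le h)]
      exact sum_add_single_one _ _
    rw [hsum]
    push_cast
    ring

lemma fderiv_monomial_apply_single (m : ι → ℕ) (x : ι → ℝ) (i : ι) :
    fderiv ℝ (monomial m) x (Pi.single i 1) = m i * monomial (m - Pi.single i 1) x := by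
  have hk : ∀ k ∈ univ, HasFDerivAt (fun y : ι → ℝ => y k ^ m k)
      ((m k * x k ^ (m k - 1) : ℝ) • ContinuousLinearMap.proj (R := ℝ) (φ := fun _ => ℝ) k) x :=
    fun k _ => (hasDerivAt_pow (m k) (x k)).comp_hasFDerivAt x (hasFDerivAt_apply k x)
  rw [show monomial m = fun y => ∏ k, y k ^ m k from rfl, (HasFDerivAt.finsetProd hk).fderiv,
    monomial_sub_single_one]
  simp [Pi.single_apply]
  ring

lemma fderiv_fderiv_monomial_apply_single (m : ι → ℕ) (x : ι → ℝ) (i j : ι) :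
    fderiv ℝ (fun y => fderiv ℝ (monomial m) y (Pi.single j 1)) x (Pi.single i 1)
      = m j * ((m - Pi.single j 1 : ι → ℕ) i
          * monomial (m - Pi.single j 1 - Pi.single i 1) x) := by
  simp only [fderiv_monomial_apply_single]
  rw [fderiv_const_mul (differentiable_monomial _).differentiableAt,
    smul_apply, fderiv_monomial_apply_single, smul_eq_mul]

noncomputable def generator (θ : ι → ℝ) (f : (ι → ℝ) → ℝ) (x : ι → ℝ) : ℝ :=
  (1 / 2) * ∑ i, (θ i - (∑ k, θ k) * x i) * fderiv ℝ f x (Pi.single i 1)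
    + (1 / 2) * ∑ i, ∑ j, x i * ((if i = j then (1 : ℝ) else 0) - x j) *
      fderiv ℝ (fun y => fderiv ℝ f y (Pi.single j 1)) x (Pi.single i 1)

lemma generator_const_mul (θ : ι → ℝ) (c : ℝ) (f : (ι → ℝ) → ℝ) (x : ι → ℝ) :
    generator θ (fun y => c * f y) x = c * generator θ f x := by
  have hc : ∀ g : (ι → ℝ) → ℝ, fderiv ℝ (fun y => c * g y) = c • fderiv ℝ g :=
    fun g => fderiv_const_smul_field c
  simp only [generator, hc, Pi.smul_apply, smul_apply, smul_eq_mul, mul_add, mul_sum]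
  congr 1 <;> refine sum_congr rfl fun i _ => ?_
  · ring
  · exact sum_congr rfl fun j _ => by ring

lemma generator_monomial (θ : ι → ℝ) (m : ι → ℕ) (x : ι → ℝ) :
    generator θ (monomial m) x
      = (1 / 2) * ∑ i, m i * (θ i + m i - 1) * monomial (m - Pi.single i 1) x
        - lamWF (∑ k, θ k) (∑ k, m k) * monomial m x := by
  set n := ∑ k, m k
  set S := ∑ k, θ k
  have hdrift : ∑ i, (θ i - S * x i) * (m i * monomial (m - Pi.single i 1) x)
      = ∑ i, θ i * (m i * monomial (m - Pi.single i 1) x) - S * (n * monomial m x) := by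
    rw [← sum_coord_mul_monomial_sub_single, mul_sum, ← sum_sub_distrib]
    exact sum_congr rfl fun i _ => by ring
  have hdiag : ∀ i, x i * (m i * ((m - Pi.single i 1 : ι → ℕ) i
      * monomial (m - Pi.single i 1 - Pi.single i 1) x))
      = m i * (m i - 1) * monomial (m - Pi.single i 1) x := by
    intro i
    rw [mul_left_comm, coord_mul_monomial_sub_single]
    rcases eq_or_ne (m i) 0 with h | h
    · simp [h]
    · simp [Nat.cast_sub (Nat.one_le_iff_ne_zero.mpr h)]
      ring
  have hoff : ∀ j, x j * (m j * ∑ i, x i * ((m - Pi.single j 1 : ι → ℕ) i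
      * monomial (m - Pi.single j 1 - Pi.single i 1) x))
      = (n - 1) * (m j * monomial m x) := by
    intro j
    rw [sum_coord_mul_monomial_sub_single, ← mul_assoc (m j : ℝ), natCast_mul_sum_sub_single,
      ← coord_mul_monomial_sub_single]
    ring
  have hdiffusion : ∑ i, ∑ j, x i * ((if i = j then (1 : ℝ) else 0) - x j)
      * (m j * ((m - Pi.single j 1 : ι → ℕ) i * monomial (m - Pi.single j 1 - Pi.single i 1) x))
      = ∑ i, m i * (m i - 1) * monomial (m - Pi.single i 1) x
        - ∑ j, (n - 1) * (m j * monomial m x) := by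
    have hterm : ∀ i j (T : ℝ), x i * ((if i = j then (1 : ℝ) else 0) - x j) * T
        = (if i = j then x i * T else 0) - x j * (x i * T) := by
      intro i j T
      split_ifs <;> ring
    simp only [hterm, sum_sub_distrib, sum_ite_eq, mem_univ, if_true, hdiag]
    congr 1
    rw [sum_comm]
    refine sum_congr rfl fun j _ => ?_
    rw [← hoff, mul_sum, mul_sum]
    exact sum_congr rfl fun i _ => by ring
  have hcount : ∑ j, ((n : ℝ) - 1) * (m j * monomial m x) = (n - 1) * (n * monomial m x) := by
    rw [← mul_sum, ← sum_mul, ← Nat.cast_sum]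
  have hcombine : ∑ i, m i * (θ i + m i - 1) * monomial (m - Pi.single i 1) x
      = ∑ i, θ i * (m i * monomial (m - Pi.single i 1) x)
        + ∑ i, m i * (m i - 1) * monomial (m - Pi.single i 1) x := by
    rw [← sum_add_distrib]
    exact sum_congr rfl fun i _ => by ring
  rw [generator]
  simp only [fderiv_fderiv_monomial_apply_single]
  simp only [fderiv_monomial_apply_single]
  rw [hdrift, hdiffusion, hcount, hcombine, lamWF]
  ring

lemma dualityCoeff_add_single_mul {θ : ι → ℝ} (hθ : ∀ i, 0 < θ i) (m : ι → ℕ) (i : ι) :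
    dualityCoeff θ (m + Pi.single i 1) * (θ i + m i)
      = dualityCoeff θ m * (∑ k, θ k + ∑ k, (m k : ℝ)) := by
  have hsum : ∑ k, ((m + Pi.single i 1 : ι → ℕ) k : ℝ) = ∑ k, (m k : ℝ) + 1 := by
    exact_mod_cast sum_add_single_one m i
  have hprod : ∏ k, poch (θ k) ((m + Pi.single i 1 : ι → ℕ) k)
      = (∏ k, poch (θ k) (m k)) * (θ i + m i) := by
    rw [← mul_prod_erase univ _ (mem_univ i), ← mul_prod_erase univ (fun k => poch (θ k) (m k))
      (mem_univ i), prod_congr rfl fun k hk => by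
        rw [Pi.add_apply, Pi.single_eq_of_ne (ne_of_mem_erase hk), add_zero]]
    have hi : θ i + m i ≠ 0 := by have := hθ i; positivity
    rw [Pi.add_apply, Pi.single_eq_same, Nat.cast_add, Nat.cast_one, poch_add_one hi]
    ring
  have hS : ∑ k, θ k + ∑ k, (m k : ℝ) ≠ 0 := by
    have := sum_pos (fun k _ => hθ k) ⟨i, mem_univ i⟩
    positivity
  have hP : ∏ k, poch (θ k) (m k) ≠ 0 :=
    (prod_pos fun k _ => poch_pos (hθ k) (Nat.cast_nonneg _)).ne'
  have hi : θ i + m i ≠ 0 := by have := hθ i; positivity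
  rw [dualityCoeff, dualityCoeff, hsum, hprod, poch_add_one hS]
  field_simp

lemma natCast_mul_dualityCoeff_sub_single {θ : ι → ℝ} (hθ : ∀ i, 0 < θ i) (m : ι → ℕ) (i : ι) :
    (m i : ℝ) * (dualityCoeff θ (m - Pi.single i 1) * (∑ k, θ k + (∑ k, m k : ℕ) - 1))
      = m i * (dualityCoeff θ m * (θ i + m i - 1)) := by
  rcases eq_or_ne (m i) 0 with h | h
  · simp [h]
  obtain ⟨m, rfl⟩ : ∃ m' : ι → ℕ, m = m' + Pi.single i 1 :=
    ⟨_, (tsub_add_cancel_of_le (single_one_le h)).symm⟩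
  congr 1
  rw [add_tsub_cancel_right, sum_add_single_one, Pi.add_apply, Pi.single_eq_same]
  push_cast
  linear_combination (dualityCoeff_add_single_mul hθ m i).symm

end WrightFisher

open WrightFisher

theorem wf_generator_duality_general (K : ℕ)
    (θ : Fin K → ℝ) (hθ : ∀ i, 0 < θ i)
    (m : Fin K → ℕ)
    (x : Fin K → ℝ) :
    (1 / 2) * ∑ i, (θ i - (∑ k, θ k) * x i) *
        fderiv ℝ (dualityG θ m) x (Pi.single i 1)
      + (1 / 2) * ∑ i, ∑ j, x i * ((if i = j then (1 : ℝ) else 0) - x j) *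
        fderiv ℝ (fun y => fderiv ℝ (dualityG θ m) y (Pi.single j 1)) x
          (Pi.single i 1)
    = lamWF (∑ k, θ k) (∑ i, m i) *
        ∑ i, ((m i : ℝ) / (∑ k, m k : ℕ)) *
          (dualityG θ (Function.update m i (m i - 1)) x - dualityG θ m x) := by
  change generator θ (fun y => dualityCoeff θ m * monomial m y) x = _
  simp only [update_tsub_one_eq_sub_single, dualityG_eq_mul_monomial]
  rw [generator_const_mul, generator_monomial, lamWF_mul_sum_div_mul]
  have hterm : ∀ i, (m i : ℝ) * (∑ k, θ k + (∑ k, m k : ℕ) - 1) / 2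
      * (dualityCoeff θ (m - Pi.single i 1) * monomial (m - Pi.single i 1) x
        - dualityCoeff θ m * monomial m x)
      = dualityCoeff θ m * ((1 / 2) * (m i * (θ i + m i - 1) * monomial (m - Pi.single i 1) x))
        - m i * (∑ k, θ k + (∑ k, m k : ℕ) - 1) / 2 * (dualityCoeff θ m * monomial m x) := by
    intro i
    linear_combination (monomial (m - Pi.single i 1) x / 2)
      * natCast_mul_dualityCoeff_sub_single hθ m i
  rw [sum_congr rfl fun i _ => hterm i, sum_sub_distrib, ← mul_sum, ← mul_sum, ← sum_mul,
    ← sum_div, ← sum_mul, ← Nat.cast_sum, lamWF]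
  ring

/-- the Wright–Fisher generator applied to the duality function
`g(·, m)` at a point `x` of the simplex equals
`λ_{|m|} Σ_i (m_i/|m|) [g(x, m − e_i) − g(x, m)]`. -/
theorem wf_generator_duality (K : ℕ) (hK : 2 ≤ K)
    (θ : Fin K → ℝ) (hθ : ∀ i, 0 < θ i)
    (m : Fin K → ℕ) (hm : 1 ≤ ∑ i, m i)
    (x : Fin K → ℝ) (hx : (∀ i, 0 ≤ x i ∧ x i ≤ 1) ∧ ∑ i, x i = 1) :
    (1 / 2) * ∑ i, (θ i - (∑ k, θ k) * x i) *
        fderiv ℝ (dualityG θ m) x (Pi.single i 1)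
      + (1 / 2) * ∑ i, ∑ j, x i * ((if i = j then (1 : ℝ) else 0) - x j) *
        fderiv ℝ (fun y => fderiv ℝ (dualityG θ m) y (Pi.single j 1)) x
          (Pi.single i 1)
    = lamWF (∑ k, θ k) (∑ i, m i) *
        ∑ i, ((m i : ℝ) / (∑ k, m k : ℕ)) *
          (dualityG θ (Function.update m i (m i - 1)) x - dualityG θ m x) :=
  wf_generator_duality_general K θ hθ m x
end

section
/- For every θ > 0 and all integers 0 ≤ k ≤ n, the identity Σ_{j=k}^n (−1)^{j−k+1} a_{j,k}^{(θ,n)} λ_j = λ_n if k = n−1, = −λ_n if k = n, and = 0 if k < n−1, holds. This expresses that the transition probabilities q_{n,k}(t) = Σ_{j=k}^n (−1)^{j−k} a_{j,k}^{(θ,n)} e^{−λ_j t} of the Wright–Fisher block-counting dual have derivative at t = 0 equal to the pure-death rates: (d/dt) q_{n,k}(t)|_{t=0} = λ_n for k = n−1, = −λ_n for k = n, and = 0 otherwise. -/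
/-- `a_{j,m}^{(θ)} = (2j+θ−1)(m+θ)_{(j−1)} / (m!(j−m)!)`. -/
noncomputable def acoef (θ : ℝ) (j m : ℕ) : ℝ :=
  (2 * j + θ - 1) * poch (m + θ) ((j : ℝ) - 1) /
    ((m.factorial : ℝ) * ((j - m).factorial : ℝ))

/-- `a_{j,m}^{(θ,n)} = a_{j,m}^{(θ)} · n_{[j]} / (n+θ)_{(j)}`, with `n_{[j]}`
the falling factorial. -/
noncomputable def acoefN (θ : ℝ) (j m n : ℕ) : ℝ :=
  acoef θ j m * (n.descFactorial j : ℝ) / poch (n + θ) j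


/-! Since `λ_n − λ_j = (n − j)(n + θ + j − 1)/2` is exactly the factor by which `a_{j,k}^{(θ,n)}`
and `a_{j,k}^{(θ,n−1)}` differ, `λ_j a_{j,k}^{(θ,n)} = λ_n (a_{j,k}^{(θ,n)} − a_{j,k}^{(θ,n−1)})`.
The sum therefore equals `λ_n (q_{n−1,k}(0) − q_{n,k}(0))`, and `q_{n,k}(0) = δ_{nk}` because
`j ↦ a_{j,k}^{(θ,n)}` has an explicit Gosper antidifference, so that its alternating sum
telescopes. -/

open Finset

theorem sum_Ico_neg_one_pow_mul_eq_of_eq_add {R : Type*} [CommRing R] {k a c : ℕ} (hka : k ≤ a)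
    (hac : a ≤ c) {f g : ℕ → R} (hfg : ∀ j ∈ Ico a c, f j = g j + g (j + 1)) :
    ∑ j ∈ Ico a c, (-1) ^ (j - k) * f j = (-1) ^ (a - k) * g a - (-1) ^ (c - k) * g c := by
  induction c, hac using Nat.le_induction with
  | base => simp
  | succ c hac ih =>
    have hc : c ∈ Ico a (c + 1) := mem_Ico.2 ⟨hac, c.lt_succ_self⟩
    rw [sum_Ico_succ_top hac, ih fun j hj => hfg j (Ico_subset_Ico_right c.le_succ hj), hfg c hc,
      show c + 1 - k = c - k + 1 by omega, pow_succ]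
    ring

theorem sum_Icc_max_one_eq {M : Type*} [AddCommMonoid M] {f : ℕ → M} (hf : f 0 = 0) (k n : ℕ) :
    ∑ j ∈ Icc (max k 1) n, f j = ∑ j ∈ Icc k n, f j := by
  refine sum_subset (Icc_subset_Icc_left (le_max_left k 1)) fun j hj hj' => ?_
  obtain rfl : j = 0 := by simp only [mem_Icc] at hj hj'; omega
  exact hf

section acoefN

variable {θ : ℝ}

theorem acoefN_eq_zero_of_lt {j k n : ℕ} (h : n < j) : acoefN θ j k n = 0 := by
  simp [acoefN, Nat.descFactorial_eq_zero_iff_lt.2 h]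

theorem acoefN_self (hθ : 0 < θ) {n : ℕ} (hn : 1 ≤ n) : acoefN θ n n n = 1 := by
  have hn' : (1 : ℝ) ≤ n := by exact_mod_cast hn
  simp only [acoefN, acoef, poch, Nat.sub_self, Nat.descFactorial_self, Nat.factorial_zero]
  rw [show (n : ℝ) + θ + (n - 1) = 2 * n + θ - 1 by ring,
    show (n : ℝ) + θ + n = (2 * n + θ - 1) + 1 by ring, Real.Gamma_add_one (by linarith)]
  have := (Real.Gamma_pos_of_pos (by positivity : (0 : ℝ) < n + θ)).ne'
  have := (Real.Gamma_pos_of_pos (by linarith : (0 : ℝ) < 2 * n + θ - 1)).ne'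
  have : (2 * n + θ - 1 : ℝ) ≠ 0 := by linarith
  field_simp
  ring

theorem acoefN_succ_mul_eq (hθ : 0 < θ) {j k n : ℕ} (hj : 1 ≤ j) (hkj : k ≤ j) (hjn : j ≤ n) :
    acoefN θ (j + 1) k n * (j + 1 - k) * (n + θ + j) * (2 * j + θ - 1)
      = acoefN θ j k n * (2 * j + θ + 1) * (k + θ + j - 1) * (n - j) := by
  have hj' : (1 : ℝ) ≤ j := by exact_mod_cast hj
  have hkj' : (k : ℝ) ≤ j := by exact_mod_cast hkj
  have hdesc : (n.descFactorial (j + 1) : ℝ) = (n - j) * n.descFactorial j := by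
    rw [Nat.descFactorial_succ]; push_cast [Nat.cast_sub hjn]; ring
  have hfact : ((j + 1 - k).factorial : ℝ) = (j - k + 1) * (j - k).factorial := by
    rw [Nat.succ_sub hkj, Nat.factorial_succ]; push_cast [Nat.cast_sub hkj]; ring
  simp only [acoefN, acoef, poch]
  rw [hdesc, hfact]
  push_cast
  rw [show (k : ℝ) + θ + (j + 1 - 1) = (k + θ + (j - 1)) + 1 by ring,
    show (n : ℝ) + θ + (j + 1) = (n + θ + j) + 1 by ring,
    Real.Gamma_add_one (by linarith), Real.Gamma_add_one (by positivity)]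
  have := (Real.Gamma_pos_of_pos (by positivity : (0 : ℝ) < k + θ)).ne'
  have := (Real.Gamma_pos_of_pos (by linarith : (0 : ℝ) < k + θ + (j - 1))).ne'
  have := (Real.Gamma_pos_of_pos (by positivity : (0 : ℝ) < n + θ)).ne'
  have := (Real.Gamma_pos_of_pos (by positivity : (0 : ℝ) < n + θ + j)).ne'
  have : (j - k + 1 : ℝ) ≠ 0 := by linarith
  field_simp
  ring

-- Found by Gosper's algorithm: `acoefN θ (j + 1) k n / acoefN θ j k n` is rational in `j`.
noncomputable def acoefNAntidiff (θ : ℝ) (k n j : ℕ) : ℝ :=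
  (j - k) * (n + θ + j - 1) / ((n - k) * (2 * j + θ - 1)) * acoefN θ j k n

theorem acoefN_eq_antidiff_add (hθ : 0 < θ) {j k n : ℕ} (hj : 1 ≤ j) (hkj : k ≤ j) (hjn : j ≤ n)
    (hkn : k < n) :
    acoefN θ j k n = acoefNAntidiff θ k n j + acoefNAntidiff θ k n (j + 1) := by
  have hj' : (1 : ℝ) ≤ j := by exact_mod_cast hj
  have hkj' : (k : ℝ) ≤ j := by exact_mod_cast hkj
  have hkn' : (k : ℝ) < n := by exact_mod_cast hkn
  have hQ : (n - k : ℝ) * (2 * j + θ - 1) ≠ 0 := mul_ne_zero (by linarith) (by linarith)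
  have hQ' : (n - k : ℝ) * (2 * ↑(j + 1) + θ - 1) ≠ 0 :=
    mul_ne_zero (by linarith) (by push_cast; linarith)
  have hnext : acoefNAntidiff θ k n (j + 1)
      = acoefN θ j k n * ((k + θ + j - 1) * (n - j)) / ((n - k) * (2 * j + θ - 1)) := by
    rw [acoefNAntidiff, div_mul_eq_mul_div, div_eq_div_iff hQ' hQ]
    push_cast
    linear_combination (n - k : ℝ) * acoefN_succ_mul_eq hθ hj hkj hjn
  rw [hnext, acoefNAntidiff, div_mul_eq_mul_div, ← add_div, eq_div_iff hQ]
  ring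

theorem acoefNAntidiff_zero_one (hθ : 0 < θ) {n : ℕ} (hn : 1 ≤ n) : acoefNAntidiff θ 0 n 1 = 1 := by
  have hn' : (1 : ℝ) ≤ n := by exact_mod_cast hn
  simp only [acoefNAntidiff, acoefN, acoef, poch, Nat.descFactorial_one, Nat.factorial_zero,
    Nat.factorial_one, Nat.sub_zero]
  push_cast
  rw [show (n : ℝ) + θ + 1 = (n + θ) + 1 by ring, Real.Gamma_add_one (by positivity)]
  norm_num
  rw [div_self (Real.Gamma_pos_of_pos hθ).ne', mul_div_assoc (n + θ : ℝ),
    div_self (Real.Gamma_pos_of_pos (by positivity)).ne', show (2 + θ - 1 : ℝ) = θ + 1 by ring]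
  field_simp

-- The `j = 0` term is left out: `acoefN θ 0 0 n = (θ - 1) Γ(θ - 1) / Γ(θ)` is `1`, except at
-- `θ = 1`, where the junk value `Γ 0 = 0` makes it `0`.
theorem sum_Icc_neg_one_pow_mul_acoefN_of_lt (hθ : 0 < θ) {k n : ℕ} (hkn : k < n) :
    ∑ j ∈ Icc (max k 1) n, (-1) ^ (j - k) * acoefN θ j k n = -if k = 0 then 1 else 0 := by
  have hstep : ∀ j ∈ Ico (max k 1) (n + 1),
      acoefN θ j k n = acoefNAntidiff θ k n j + acoefNAntidiff θ k n (j + 1) := fun j hj => by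
    simp only [mem_Ico, max_le_iff] at hj
    exact acoefN_eq_antidiff_add hθ hj.1.2 hj.1.1 (by omega) hkn
  have htop : acoefNAntidiff θ k n (n + 1) = 0 := by
    simp [acoefNAntidiff, acoefN_eq_zero_of_lt]
  rw [← Ico_add_one_right_eq_Icc,
    sum_Ico_neg_one_pow_mul_eq_of_eq_add (le_max_left k 1) (by omega) hstep, htop, mul_zero,
    sub_zero]
  rcases Nat.eq_zero_or_pos k with rfl | hk
  · simp [acoefNAntidiff_zero_one hθ hkn]
  · simp [max_eq_left (show 1 ≤ k from hk), acoefNAntidiff, hk.ne']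

theorem sum_Icc_neg_one_pow_mul_acoefN (hθ : 0 < θ) (k n : ℕ) :
    ∑ j ∈ Icc (max k 1) n, (-1) ^ (j - k) * acoefN θ j k n
      = (if k = n then 1 else 0) - if k = 0 then 1 else 0 := by
  rcases lt_trichotomy k n with hkn | rfl | hkn
  · rw [sum_Icc_neg_one_pow_mul_acoefN_of_lt hθ hkn, if_neg hkn.ne]
    ring
  · rcases Nat.eq_zero_or_pos k with rfl | hk
    · simp
    · simp [max_eq_left (show 1 ≤ k from hk), acoefN_self hθ hk, hk.ne']
  · rw [Icc_eq_empty (by omega), sum_empty, if_neg hkn.ne', if_neg (by omega)]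
    ring

theorem acoefN_succ_right_mul_eq (hθ : 0 < θ) {j k n : ℕ} (hj : j ≤ n + 1) :
    (n + 1 - j) * (n + θ + j) * acoefN θ j k (n + 1) = (n + 1) * (n + θ) * acoefN θ j k n := by
  have hGn := (Real.Gamma_pos_of_pos (by positivity : (0 : ℝ) < n + θ)).ne'
  rcases Nat.eq_zero_or_pos j with rfl | hj0
  · simp only [acoefN, poch, Nat.descFactorial_zero, Nat.cast_zero, Nat.cast_one, add_zero]
    rw [div_self hGn, div_self (Real.Gamma_pos_of_pos (by positivity)).ne']
    ring
  obtain ⟨i, rfl⟩ : ∃ i, j = i + 1 := ⟨j - 1, by omega⟩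
  have hd1 : ((n + 1).descFactorial (i + 1) : ℝ) = (n + 1) * n.descFactorial i := by
    rw [Nat.succ_descFactorial_succ]; push_cast; ring
  have hd2 : (n.descFactorial (i + 1) : ℝ) = (n - i) * n.descFactorial i := by
    rw [Nat.descFactorial_succ]; push_cast [Nat.cast_sub (by omega : i ≤ n)]; ring
  simp only [acoefN, poch]
  rw [hd1, hd2]
  push_cast
  rw [show (n : ℝ) + 1 + θ = (n + θ) + 1 by ring, Real.Gamma_add_one (by positivity),
    show (n : ℝ) + θ + 1 + (i + 1) = (n + θ + (i + 1)) + 1 by ring,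
    Real.Gamma_add_one (by positivity)]
  have := (Real.Gamma_pos_of_pos (by positivity : (0 : ℝ) < n + θ + (i + 1))).ne'
  field_simp
  ring

-- `λ_{n+1} - λ_j = (n + 1 - j)(n + θ + j)/2`, the factor relating `acoefN` at `n + 1` and at `n`.
theorem lamWF_mul_acoefN_succ_right (hθ : 0 < θ) {j k n : ℕ} (hj : j ≤ n + 1) :
    lamWF θ j * acoefN θ j k (n + 1)
      = lamWF θ (n + 1) * (acoefN θ j k (n + 1) - acoefN θ j k n) := by
  simp only [lamWF]
  push_cast
  linear_combination (-1 / 2 : ℝ) * acoefN_succ_right_mul_eq (k := k) hθ hj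

theorem sum_Icc_neg_one_pow_mul_acoefN_mul_lamWF (hθ : 0 < θ) (k n : ℕ) :
    ∑ j ∈ Icc k n, (-1 : ℝ) ^ (j - k + 1) * acoefN θ j k n * lamWF θ j
      = lamWF θ n * ((if k + 1 = n then 1 else 0) - if k = n then 1 else 0) := by
  rcases n with _ | m
  · rw [sum_eq_zero fun j hj => by rw [Nat.le_zero.1 (mem_Icc.1 hj).2]; simp [lamWF]]
    simp [lamWF]
  rw [← sum_Icc_max_one_eq (by simp [lamWF])]
  have hextend : ∑ j ∈ Icc (max k 1) (m + 1), (-1) ^ (j - k) * acoefN θ j k m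
      = ∑ j ∈ Icc (max k 1) m, (-1) ^ (j - k) * acoefN θ j k m := by
    refine (sum_subset (Icc_subset_Icc_right m.le_succ) fun j hj hj' => ?_).symm
    simp only [mem_Icc] at hj hj'
    rw [acoefN_eq_zero_of_lt (by omega), mul_zero]
  calc ∑ j ∈ Icc (max k 1) (m + 1), (-1 : ℝ) ^ (j - k + 1) * acoefN θ j k (m + 1) * lamWF θ j
      = lamWF θ (m + 1) * (∑ j ∈ Icc (max k 1) (m + 1), (-1) ^ (j - k) * acoefN θ j k m
          - ∑ j ∈ Icc (max k 1) (m + 1), (-1) ^ (j - k) * acoefN θ j k (m + 1)) := by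
        rw [mul_sub, mul_sum, mul_sum, ← sum_sub_distrib]
        refine sum_congr rfl fun j hj => ?_
        rw [pow_succ]
        linear_combination (-(-1) ^ (j - k) : ℝ) * lamWF_mul_acoefN_succ_right hθ (mem_Icc.1 hj).2
    _ = lamWF θ (m + 1) * ((if k + 1 = m + 1 then 1 else 0) - if k = m + 1 then 1 else 0) := by
        rw [hextend, sum_Icc_neg_one_pow_mul_acoefN hθ, sum_Icc_neg_one_pow_mul_acoefN hθ]
        simp only [Nat.add_right_cancel_iff]
        ring

end acoefN

theorem dual_rates_at_zero_general (θ : ℝ) (hθ : 0 < θ)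
    (k n : ℕ) :
    (k + 1 = n →
      (∑ j ∈ Finset.Icc k n, (-1 : ℝ) ^ (j - k + 1) * acoefN θ j k n * lamWF θ j)
        = lamWF θ n)
    ∧ (k = n →
      (∑ j ∈ Finset.Icc k n, (-1 : ℝ) ^ (j - k + 1) * acoefN θ j k n * lamWF θ j)
        = -(lamWF θ n))
    ∧ (k + 1 < n →
      (∑ j ∈ Finset.Icc k n, (-1 : ℝ) ^ (j - k + 1) * acoefN θ j k n * lamWF θ j)
        = 0) := by
  simp only [sum_Icc_neg_one_pow_mul_acoefN_mul_lamWF hθ k n]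
  refine ⟨fun h => ?_, fun h => ?_, fun h => ?_⟩
  · rw [if_pos h, if_neg (by omega)]; ring
  · rw [if_neg (by omega), if_pos h]; ring
  · rw [if_neg (by omega), if_neg (by omega)]; ring

/-- `Σ_{j=k}^n (−1)^{j−k+1} a_{j,k}^{(θ,n)} λ_j` equals `λ_n`
if `k = n−1`, `−λ_n` if `k = n`, and `0` if `k < n−1`; i.e. the dual
transition probabilities have derivative at `t = 0` given by the pure-death
rates. -/
theorem dual_rates_at_zero (θ : ℝ) (hθ : 0 < θ)
    (k n : ℕ) (hkn : k ≤ n) :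
    (k + 1 = n →
      (∑ j ∈ Finset.Icc k n, (-1 : ℝ) ^ (j - k + 1) * acoefN θ j k n * lamWF θ j)
        = lamWF θ n)
    ∧ (k = n →
      (∑ j ∈ Finset.Icc k n, (-1 : ℝ) ^ (j - k + 1) * acoefN θ j k n * lamWF θ j)
        = -(lamWF θ n))
    ∧ (k + 1 < n →
      (∑ j ∈ Finset.Icc k n, (-1 : ℝ) ^ (j - k + 1) * acoefN θ j k n * lamWF θ j)
        = 0) :=
  dual_rates_at_zero_general θ hθ k n
end
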